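/- arXiv:2305.10700 — 3 statements merged into one kernel-verified Lean document; each statement's English description precedes it below -/
import Mathlib

section
/- Fix γ > 0 and β < 0. Then for every natural number Θ ≥ 1, every integer n with n < -Θ or n > 0, and every k > 0, the quantity X(n,Θ) = -γ·J(n,Θ) + β·k⁴·U(n,Θ) is strictly negative; hence there is no real ρ with ρ² = X(n,Θ). -/
theorem stmt_6 (γ β : ℝ) (hγ : 0 < γ) (hβ : β < 0)
    (Θ : ℕ) (hΘ : 1 ≤ Θ) (n : ℤ) (hn : n < -(Θ : ℤ) ∨ 0 < n)
    (k : ℝ) (hk : 0 < k) :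
    -γ * ((n : ℝ) * ((n : ℝ) + (Θ : ℝ)) + 1)
      + β * k^4 * (3 * (n : ℝ)^2 * ((n : ℝ) + (Θ : ℝ))^2
        + (n : ℝ) * ((n : ℝ) + (Θ : ℝ)) * ((Θ : ℝ)^2 - 1)) < 0 ∧
    ¬ ∃ ρ : ℝ, ρ^2 =
      -γ * ((n : ℝ) * ((n : ℝ) + (Θ : ℝ)) + 1)
      + β * k^4 * (3 * (n : ℝ)^2 * ((n : ℝ) + (Θ : ℝ))^2
        + (n : ℝ) * ((n : ℝ) + (Θ : ℝ)) * ((Θ : ℝ)^2 - 1)) := by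
  have hmZ : (1 : ℤ) ≤ n * (n + (Θ : ℤ)) := by
    rcases hn with h | h
    · have h1 : n + (Θ : ℤ) ≤ -1 := by omega
      have h2 : n ≤ -1 := by omega
      nlinarith
    · have h1 : 1 ≤ n := h
      have h2 : 1 ≤ n + (Θ : ℤ) := by omega
      nlinarith
  have hm : (1 : ℝ) ≤ (n : ℝ) * ((n : ℝ) + (Θ : ℝ)) := by
    have : ((1:ℤ):ℝ) ≤ ((n * (n + (Θ : ℤ)) : ℤ) : ℝ) := Int.cast_le.mpr hmZ
    push_cast at this
    linarith
  have hΘR : (1 : ℝ) ≤ (Θ : ℝ) := by exact_mod_cast hΘ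
  have hk4 : 0 < k ^ 4 := by positivity
  have hU : 0 ≤ 3 * (n : ℝ)^2 * ((n : ℝ) + (Θ : ℝ))^2
        + (n : ℝ) * ((n : ℝ) + (Θ : ℝ)) * ((Θ : ℝ)^2 - 1) := by
    nlinarith [sq_nonneg ((n : ℝ) * ((n : ℝ) + (Θ : ℝ))), sq_nonneg (Θ : ℝ)]
  have hX : -γ * ((n : ℝ) * ((n : ℝ) + (Θ : ℝ)) + 1)
      + β * k^4 * (3 * (n : ℝ)^2 * ((n : ℝ) + (Θ : ℝ))^2
        + (n : ℝ) * ((n : ℝ) + (Θ : ℝ)) * ((Θ : ℝ)^2 - 1)) < 0 := by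
    nlinarith [mul_nonneg (le_of_lt (mul_pos (neg_pos.mpr hβ) hk4)) hU]
  refine ⟨hX, ?_⟩
  rintro ⟨ρ, hρ⟩
  nlinarith [sq_nonneg ρ]
end

section
/- Let Θ ≥ 2 be a natural number and ξ ∈ (0,1/2]. Then V(n,ξ,Θ) = 3(n+ξ)²(n+ξ+Θ)² + (n+ξ)(n+ξ+Θ)(Θ²-1) is strictly positive for all integers n with n ≤ -Θ-1 or n ≥ 0, and strictly negative for all integers n with -Θ ≤ n ≤ -1. -/
lemma key_aux (T x : ℝ) (hT : 2 ≤ T) (hx : x ≠ -1) :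
    0 < 3*x^2 + 3*T*x + T^2 - 1 := by
  have h1 : x + 1 ≠ 0 := fun h => hx (by linarith)
  have h2 : 0 < (x + 1)^2 := by positivity
  nlinarith [sq_nonneg (2*x + T), mul_nonneg (by linarith : (0:ℝ) ≤ T - 2) h2.le,
    sq_nonneg (T - 2)]

theorem stmt_11 (Θ : ℕ) (hΘ : 2 ≤ Θ) (ξ : ℝ) (hξ0 : 0 < ξ) (hξ1 : ξ ≤ 1/2) :
    (∀ n : ℤ, n ≤ -(Θ : ℤ) - 1 ∨ 0 ≤ n →
      0 < 3 * ((n : ℝ) + ξ)^2 * ((n : ℝ) + ξ + (Θ : ℝ))^2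
        + ((n : ℝ) + ξ) * ((n : ℝ) + ξ + (Θ : ℝ)) * ((Θ : ℝ)^2 - 1)) ∧
    (∀ n : ℤ, -(Θ : ℤ) ≤ n → n ≤ -1 →
      3 * ((n : ℝ) + ξ)^2 * ((n : ℝ) + ξ + (Θ : ℝ))^2
        + ((n : ℝ) + ξ) * ((n : ℝ) + ξ + (Θ : ℝ)) * ((Θ : ℝ)^2 - 1) < 0) := by
  have hΘr : (2:ℝ) ≤ (Θ:ℝ) := by exact_mod_cast hΘ
  constructor
  · intro n hn
    set x : ℝ := (n:ℝ) + ξ with hxdef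
    have hfac : 3 * x^2 * (x + (Θ:ℝ))^2 + x * (x + (Θ:ℝ)) * ((Θ:ℝ)^2 - 1)
        = x * (x + (Θ:ℝ)) * (3*x^2 + 3*(Θ:ℝ)*x + (Θ:ℝ)^2 - 1) := by ring
    rw [hfac]
    rcases hn with hn | hn
    · have hnr : (n:ℝ) ≤ -(Θ:ℝ) - 1 := by exact_mod_cast hn
      have hx : x < 0 := by simp only [hxdef]; linarith
      have hxT : x + (Θ:ℝ) < 0 := by simp only [hxdef]; linarith
      have hne : x ≠ -1 := by intro h; simp only [hxdef] at h; linarith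
      exact mul_pos (mul_pos_of_neg_of_neg hx hxT) (key_aux _ _ hΘr hne)
    · have hnr : (0:ℝ) ≤ (n:ℝ) := by exact_mod_cast hn
      have hx : 0 < x := by simp only [hxdef]; linarith
      have hxT : 0 < x + (Θ:ℝ) := by linarith
      have hne : x ≠ -1 := by intro h; linarith
      exact mul_pos (mul_pos hx hxT) (key_aux _ _ hΘr hne)
  · intro n hn1 hn2
    set x : ℝ := (n:ℝ) + ξ with hxdef
    have hfac : 3 * x^2 * (x + (Θ:ℝ))^2 + x * (x + (Θ:ℝ)) * ((Θ:ℝ)^2 - 1)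
        = x * (x + (Θ:ℝ)) * (3*x^2 + 3*(Θ:ℝ)*x + (Θ:ℝ)^2 - 1) := by ring
    rw [hfac]
    have hnr1 : -(Θ:ℝ) ≤ (n:ℝ) := by exact_mod_cast hn1
    have hnr2 : (n:ℝ) ≤ -1 := by exact_mod_cast hn2
    have hx : x < 0 := by simp only [hxdef]; linarith
    have hxT : 0 < x + (Θ:ℝ) := by simp only [hxdef]; linarith
    have hne : x ≠ -1 := by
      rcases eq_or_lt_of_le hn2 with h | h
      · intro hc; simp only [hxdef, h] at hc; push_cast at hc; linarith
      · have : (n:ℝ) ≤ -2 := by exact_mod_cast (by linarith : n ≤ -2)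
        intro hc; simp only [hxdef] at hc; linarith
    exact mul_neg_of_neg_of_pos (mul_neg_of_neg_of_pos hx hxT) (key_aux _ _ hΘr hne)
end

section
/- Let γ > 0, β ∈ ℝ, k > 0, n ∈ ℤ, ξ ∈ (-1/2, 1/2] with n + ξ ≠ 0, and define Ω_{n,ρ,ξ} = γ((n+ξ) - 1/(n+ξ)) + βk⁴((n+ξ) - (n+ξ)³) - ρ²/(n+ξ). Then for nonzero integers offsets, Ω_{n,ρ,ξ} = Ω_{n+Θ,ρ,ξ} for Θ ∈ ℕ if and only if ρ² = -γ·((n+ξ)(n+ξ+Θ)+1) + βk⁴·(3(n+ξ)²(n+ξ+Θ)² + (n+ξ)(n+ξ+Θ)(Θ²-1)). -/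
theorem stmt_12 (γ β k : ℝ) (hγ : 0 < γ) (hk : 0 < k)
    (n : ℤ) (ξ : ℝ) (hξ : -(1/2 : ℝ) < ξ ∧ ξ ≤ 1/2)
    (hne : (n : ℝ) + ξ ≠ 0) (Θ : ℕ) (hΘ : 1 ≤ Θ)
    (hne' : (n : ℝ) + (Θ : ℝ) + ξ ≠ 0) (ρ : ℝ) :
    (γ * (((n : ℝ) + ξ) - 1/((n : ℝ) + ξ))
        + β * k^4 * (((n : ℝ) + ξ) - ((n : ℝ) + ξ)^3) - ρ^2/((n : ℝ) + ξ)
      = γ * (((n : ℝ) + (Θ : ℝ) + ξ) - 1/((n : ℝ) + (Θ : ℝ) + ξ))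
        + β * k^4 * (((n : ℝ) + (Θ : ℝ) + ξ) - ((n : ℝ) + (Θ : ℝ) + ξ)^3)
        - ρ^2/((n : ℝ) + (Θ : ℝ) + ξ))
    ↔ ρ^2 = -γ * (((n : ℝ) + ξ) * ((n : ℝ) + ξ + (Θ : ℝ)) + 1)
        + β * k^4 * (3 * ((n : ℝ) + ξ)^2 * ((n : ℝ) + ξ + (Θ : ℝ))^2
          + ((n : ℝ) + ξ) * ((n : ℝ) + ξ + (Θ : ℝ)) * ((Θ : ℝ)^2 - 1)) := by
  have hΘ0 : (Θ : ℝ) ≠ 0 := by positivity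
  constructor
  · intro h
    field_simp at h
    apply mul_left_cancel₀ hΘ0
    linear_combination -h
  · intro h
    field_simp
    linear_combination -(Θ : ℝ) * h
end
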